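/- Let θ be a categorical distribution on a finite nonempty set X, let α ≠ 0, n ≥ 1 and ε > 0. Then the cardinality of the tilted weakly typical set of order α satisfies (1 − V(T(θ,α)||θ)/(n·ε²))·exp(n·H(T(θ,α)) − n·|α|·ε) ≤ |A^n_{θ,α,ε}| < exp(n·H(T(θ,α)) + n·|α|·ε). -/

import Mathlib

open Real BigOperators
open scoped Classical

variable {X : Type*}

/-- A categorical distribution on a finite set: positive everywhere and sums to 1. -/
def IsCatDist [Fintype X] (θ : X → ℝ) : Prop :=
  (∀ x, 0 < θ x) ∧ ∑ x, θ x = 1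

/-- The tilt of order `α` of a categorical distribution. -/
noncomputable def tilt [Fintype X] (θ : X → ℝ) (α : ℝ) : X → ℝ :=
  fun x => θ x ^ α / ∑ y, θ y ^ α

/-- Shannon entropy (natural log). -/
noncomputable def shannonEntropy [Fintype X] (ρ : X → ℝ) : ℝ :=
  ∑ x, ρ x * Real.log (1 / ρ x)

/-- Cross entropy `H(ρ‖θ)`. -/
noncomputable def crossEntropy [Fintype X] (ρ θ : X → ℝ) : ℝ :=
  ∑ x, ρ x * Real.log (1 / θ x)

/-- Relative entropy (KL divergence) `D(ρ‖θ)`. -/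
noncomputable def relEntropy [Fintype X] (ρ θ : X → ℝ) : ℝ :=
  ∑ x, ρ x * Real.log (ρ x / θ x)

/-- Rényi entropy of order `α`. -/
noncomputable def renyiEntropy [Fintype X] (θ : X → ℝ) (α : ℝ) : ℝ :=
  (1 / (1 - α)) * Real.log (∑ x, θ x ^ α)

/-- Varentropy. -/
noncomputable def varentropy [Fintype X] (ρ : X → ℝ) : ℝ :=
  ∑ x, ρ x * (Real.log (1 / ρ x) - shannonEntropy ρ) ^ 2

/-- Cross varentropy. -/
noncomputable def crossVarentropy [Fintype X] (ρ θ : X → ℝ) : ℝ :=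
  ∑ x, ρ x * (Real.log (1 / θ x) - crossEntropy ρ θ) ^ 2

/-- Probability of an `n`-string under the i.i.d. extension of `θ`. -/
noncomputable def strProb (θ : X → ℝ) {n : ℕ} (x : Fin n → X) : ℝ := ∏ i, θ (x i)

/-- Probability of a set of `n`-strings. -/
noncomputable def setProb [Fintype X] (θ : X → ℝ) {n : ℕ} (S : Finset (Fin n → X)) : ℝ :=
  ∑ x ∈ S, strProb θ x

/-- `θ` has a unique maximizer and a unique minimizer. -/
def UniqueExtremizers [Fintype X] (θ : X → ℝ) : Prop :=
  (∃! x : X, ∀ y, θ y ≤ θ x) ∧ (∃! x : X, ∀ y, θ x ≤ θ y)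

/-- Tilted weakly typical set of order `α`. -/
noncomputable def typicalSetA [Fintype X] (θ : X → ℝ) (α : ℝ) (n : ℕ) (ε : ℝ) :
    Finset (Fin n → X) :=
  Finset.univ.filter (fun x =>
    Real.exp (-(n : ℝ) * crossEntropy (tilt θ α) θ - n * ε) < strProb θ x ∧
    strProb θ x < Real.exp (-(n : ℝ) * crossEntropy (tilt θ α) θ + n * ε))

/-- The set `D^n_{θ,α,ε}`. -/
noncomputable def setD [Fintype X] (θ : X → ℝ) (α : ℝ) (n : ℕ) (ε : ℝ) :
    Finset (Fin n → X) :=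
  Finset.univ.filter (fun x =>
    strProb (tilt θ α) x > Real.exp (-(n : ℝ) * shannonEntropy (tilt θ α) - n * |α| * ε))

/-- The set `E^n_{θ,α,ε}`. -/
noncomputable def setE [Fintype X] (θ : X → ℝ) (α : ℝ) (n : ℕ) (ε : ℝ) :
    Finset (Fin n → X) :=
  Finset.univ.filter (fun x =>
    strProb (tilt θ α) x < Real.exp (-(n : ℝ) * shannonEntropy (tilt θ α) + n * |α| * ε))

/-- A guesswork function for `θ` on `n`-strings: a bijection onto `{1,…,|X|^n}`
that orders strings from most likely to least likely. -/
def IsGuesswork [Fintype X] (θ : X → ℝ) {n : ℕ} (G : (Fin n → X) → ℕ) : Prop :=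
  Function.Injective G ∧
  (∀ x, G x ∈ Finset.Icc 1 (Fintype.card X ^ n)) ∧
  (∀ m ∈ Finset.Icc 1 (Fintype.card X ^ n), ∃ x, G x = m) ∧
  (∀ x y, strProb θ x > strProb θ y → G x < G y)

/-!
Write `t = T(θ,α)` and `Z = ∑ θ^α`. Since `log (1/t) = α log (1/θ) + log Z`, both
`H(t) = α H(t‖θ) + log Z` and `log (1/tⁿ(xⁿ)) - n H(t) = α (log (1/θⁿ(xⁿ)) - n H(t‖θ))`.
Hence every `xⁿ` in the typical set has `tⁿ(xⁿ)` within a factor `exp (± n|α|ε)` of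
`exp (-n H(t))`, and comparing `|A|` with `tⁿ(A) ≤ 1` gives the upper bound. For the lower
bound, `log (1/θⁿ(Xⁿ)) = ∑ log (1/θ(Xᵢ))` is an i.i.d. sum under `tⁿ` with mean `n H(t‖θ)` and
variance `n V(t‖θ)`, so Chebyshev's inequality gives `tⁿ(A) ≥ 1 - V(t‖θ)/(nε²)`.
-/

section Strings

open Finset

theorem strProb_cons (ρ : X → ℝ) {n : ℕ} (a : X) (y : Fin n → X) :
    strProb ρ (Fin.cons a y : Fin (n + 1) → X) = ρ a * strProb ρ y := by
  simp [strProb, Fin.prod_univ_succ]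

theorem strProb_nonneg {ρ : X → ℝ} (hρ : ∀ a, 0 ≤ ρ a) {n : ℕ} (x : Fin n → X) :
    0 ≤ strProb ρ x :=
  prod_nonneg fun i _ => hρ (x i)

theorem log_one_div_strProb {ρ : X → ℝ} (hρ : ∀ a, 0 < ρ a) {n : ℕ} (x : Fin n → X) :
    Real.log (1 / strProb ρ x) = ∑ i, Real.log (1 / ρ (x i)) := by
  simp only [strProb, one_div, Real.log_inv, Real.log_prod fun i _ => (hρ (x i)).ne',
    sum_neg_distrib]

theorem strProb_pos {ρ : X → ℝ} (hρ : ∀ a, 0 < ρ a) {n : ℕ} (x : Fin n → X) :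
    0 < strProb ρ x :=
  prod_pos fun i _ => hρ (x i)

variable [Fintype X]

theorem sum_pi_fin_succ {n : ℕ} (F : (Fin (n + 1) → X) → ℝ) :
    ∑ x, F x = ∑ a, ∑ y : Fin n → X, F (Fin.cons a y) := by
  rw [← (Fin.consEquiv fun _ => X).sum_comp, Fintype.sum_prod_type]
  rfl

theorem sum_strProb {ρ : X → ℝ} (h1 : ∑ a, ρ a = 1) (n : ℕ) :
    ∑ x : Fin n → X, strProb ρ x = 1 := by
  unfold strProb
  rw [← Fintype.sum_pow, h1, one_pow]

theorem setProb_le_one {ρ : X → ℝ} (hρ : IsCatDist ρ) {n : ℕ} (S : Finset (Fin n → X)) :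
    setProb ρ S ≤ 1 :=
  sum_strProb hρ.2 n ▸ sum_le_univ_sum_of_nonneg fun x => strProb_nonneg (fun a => (hρ.1 a).le) x

theorem setProb_add_setProb_compl {ρ : X → ℝ} (h1 : ∑ a, ρ a = 1) {n : ℕ}
    (S : Finset (Fin n → X)) : setProb ρ S + setProb ρ Sᶜ = 1 :=
  (sum_add_sum_compl S _).trans (sum_strProb h1 n)

theorem setProb_le_card_mul {ρ : X → ℝ} {n : ℕ} {S : Finset (Fin n → X)} {c : ℝ}
    (hS : ∀ x ∈ S, strProb ρ x ≤ c) : setProb ρ S ≤ S.card * c := by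
  simpa [setProb] using sum_le_card_nsmul S _ c hS

theorem card_lt_inv_of_lt_strProb {ρ : X → ℝ} (hρ : IsCatDist ρ) {n : ℕ}
    {S : Finset (Fin n → X)} {c : ℝ} (hc : 0 < c) (hS : ∀ x ∈ S, c < strProb ρ x) :
    (S.card : ℝ) < c⁻¹ := by
  rw [← one_div, lt_div_iff₀ hc]
  rcases S.eq_empty_or_nonempty with rfl | hne
  · simp
  · calc (S.card : ℝ) * c < setProb ρ S := by
          simpa [setProb] using sum_lt_sum_of_nonempty hne hS
      _ ≤ 1 := setProb_le_one hρ S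

theorem sum_strProb_mul_sum_sq {ρ g : X → ℝ} (h1 : ∑ a, ρ a = 1) (h0 : ∑ a, ρ a * g a = 0) :
    ∀ n : ℕ, ∑ x : Fin n → X, strProb ρ x * (∑ i, g (x i)) ^ 2 = n * ∑ a, ρ a * g a ^ 2
  | 0 => by simp
  | n + 1 => by
    have expand (a : X) (y : Fin n → X) :
        strProb ρ (Fin.cons a y : Fin (n + 1) → X) *
            (∑ i, g ((Fin.cons a y : Fin (n + 1) → X) i)) ^ 2
          = ρ a * g a ^ 2 * strProb ρ y + 2 * (ρ a * g a) * (strProb ρ y * ∑ i, g (y i))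
            + ρ a * (strProb ρ y * (∑ i, g (y i)) ^ 2) := by
      rw [strProb_cons, Fin.sum_univ_succ]
      simp only [Fin.cons_zero, Fin.cons_succ]
      ring
    simp_rw [sum_pi_fin_succ, expand, sum_add_distrib, ← mul_sum, sum_strProb h1,
      sum_strProb_mul_sum_sq h1 h0 n, ← sum_mul, ← mul_sum, h0, h1]
    push_cast
    ring

theorem sum_filter_le_sum_mul_sq_div {ι : Type*} [Fintype ι] {p f : ι → ℝ}
    (hp : ∀ x, 0 ≤ p x) {c : ℝ} (hc : 0 < c) :
    ∑ x ∈ univ.filter (fun x => c ≤ |f x|), p x ≤ (∑ x, p x * f x ^ 2) / c ^ 2 := by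
  rw [le_div_iff₀ (by positivity), sum_mul]
  calc ∑ x ∈ univ.filter (fun x => c ≤ |f x|), p x * c ^ 2
      ≤ ∑ x ∈ univ.filter (fun x => c ≤ |f x|), p x * f x ^ 2 := by
        refine sum_le_sum fun x hx => mul_le_mul_of_nonneg_left ?_ (hp x)
        rw [← sq_abs (f x)]
        exact pow_le_pow_left₀ hc.le (mem_filter.1 hx).2 2
    _ ≤ ∑ x, p x * f x ^ 2 :=
        sum_le_univ_sum_of_nonneg fun x => mul_nonneg (hp x) (sq_nonneg _)

theorem setProb_abs_sum_sub_ge_le {ρ : X → ℝ} (hρ : IsCatDist ρ) (f : X → ℝ) (n : ℕ)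
    {c : ℝ} (hc : 0 < c) :
    setProb ρ (univ.filter fun x : Fin n → X => c ≤ |∑ i, f (x i) - n * ∑ a, ρ a * f a|) ≤
      n * (∑ a, ρ a * (f a - ∑ b, ρ b * f b) ^ 2) / c ^ 2 := by
  set μ := ∑ b, ρ b * f b
  have hcentre (x : Fin n → X) : ∑ i, f (x i) - n * μ = ∑ i, (f (x i) - μ) := by
    simp [sum_sub_distrib]
  have hmean : ∑ a, ρ a * (f a - μ) = 0 := by
    simp only [mul_sub, sum_sub_distrib, ← sum_mul, hρ.2, one_mul, μ, sub_self]
  unfold setProb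
  simp_rw [hcentre]
  rw [← sum_strProb_mul_sum_sq hρ.2 hmean n]
  exact sum_filter_le_sum_mul_sq_div (strProb_nonneg fun a => (hρ.1 a).le) hc

end Strings

section Tilt

open Finset

variable [Fintype X] [Nonempty X] {θ : X → ℝ}

theorem sum_rpow_pos (hθ : ∀ a, 0 < θ a) (α : ℝ) : 0 < ∑ a, θ a ^ α :=
  sum_pos (fun a _ => Real.rpow_pos_of_pos (hθ a) α) univ_nonempty

theorem isCatDist_tilt (hθ : ∀ a, 0 < θ a) (α : ℝ) : IsCatDist (tilt θ α) :=
  ⟨fun a => div_pos (Real.rpow_pos_of_pos (hθ a) α) (sum_rpow_pos hθ α),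
    by simp only [tilt, ← sum_div, div_self (sum_rpow_pos hθ α).ne']⟩

theorem log_one_div_tilt (hθ : ∀ a, 0 < θ a) (α : ℝ) (a : X) :
    Real.log (1 / tilt θ α a) = α * Real.log (1 / θ a) + Real.log (∑ b, θ b ^ α) := by
  rw [tilt, one_div_div, Real.log_div (sum_rpow_pos hθ α).ne' (Real.rpow_pos_of_pos (hθ a) α).ne',
    Real.log_rpow (hθ a), one_div, Real.log_inv]
  ring

theorem crossEntropy_tilt (hθ : ∀ a, 0 < θ a) (α : ℝ) {ρ : X → ℝ} (hρ : ∑ a, ρ a = 1) :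
    crossEntropy ρ (tilt θ α) = α * crossEntropy ρ θ + Real.log (∑ b, θ b ^ α) := by
  simp only [crossEntropy, log_one_div_tilt hθ, mul_add, sum_add_distrib, ← sum_mul, hρ, one_mul,
    mul_left_comm _ α, ← mul_sum]

theorem shannonEntropy_tilt (hθ : ∀ a, 0 < θ a) (α : ℝ) :
    shannonEntropy (tilt θ α) =
      α * crossEntropy (tilt θ α) θ + Real.log (∑ b, θ b ^ α) :=
  crossEntropy_tilt hθ α (isCatDist_tilt hθ α).2

theorem log_one_div_strProb_tilt (hθ : ∀ a, 0 < θ a) (α : ℝ) {n : ℕ} (x : Fin n → X) :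
    Real.log (1 / strProb (tilt θ α) x) =
      α * Real.log (1 / strProb θ x) + n * Real.log (∑ b, θ b ^ α) := by
  simp only [log_one_div_strProb (isCatDist_tilt hθ α).1, log_one_div_strProb hθ,
    log_one_div_tilt hθ, sum_add_distrib, ← mul_sum, sum_const, card_univ, Fintype.card_fin,
    nsmul_eq_mul]

theorem log_one_div_strProb_tilt_sub (hθ : ∀ a, 0 < θ a) (α : ℝ) {n : ℕ} (x : Fin n → X) :
    Real.log (1 / strProb (tilt θ α) x) - n * shannonEntropy (tilt θ α) =
      α * (Real.log (1 / strProb θ x) - n * crossEntropy (tilt θ α) θ) := by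
  rw [log_one_div_strProb_tilt hθ, shannonEntropy_tilt hθ]
  ring

end Tilt

theorem exp_neg_sub_lt_and_lt_exp_neg_add_iff {p : ℝ} (hp : 0 < p) (a b : ℝ) :
    Real.exp (-a - b) < p ∧ p < Real.exp (-a + b) ↔ |Real.log (1 / p) - a| < b := by
  rw [abs_lt, ← Real.lt_log_iff_exp_lt hp, ← Real.log_lt_iff_lt_exp hp, one_div, Real.log_inv]
  constructor <;> rintro ⟨h₁, h₂⟩ <;> constructor <;> linarith

section TypicalSet

open Finset

variable [Fintype X] {θ : X → ℝ} {α ε : ℝ} {n : ℕ}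

theorem mem_typicalSetA_iff (hθ : ∀ a, 0 < θ a) {x : Fin n → X} :
    x ∈ typicalSetA θ α n ε ↔
      |Real.log (1 / strProb θ x) - n * crossEntropy (tilt θ α) θ| < n * ε := by
  rw [← exp_neg_sub_lt_and_lt_exp_neg_add_iff (strProb_pos hθ x)]
  simp [typicalSetA, neg_mul]

variable [Nonempty X]

theorem abs_log_one_div_strProb_tilt_sub_lt (hθ : ∀ a, 0 < θ a) (hα : α ≠ 0)
    {x : Fin n → X} (hx : x ∈ typicalSetA θ α n ε) :
    |Real.log (1 / strProb (tilt θ α) x) - n * shannonEntropy (tilt θ α)| < n * |α| * ε := by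
  rw [log_one_div_strProb_tilt_sub hθ, abs_mul, show (n : ℝ) * |α| * ε = |α| * (n * ε) by ring]
  exact mul_lt_mul_of_pos_left ((mem_typicalSetA_iff hθ).1 hx) (abs_pos.2 hα)

theorem typicalSetA_subset_setD (hθ : ∀ a, 0 < θ a) (hα : α ≠ 0) :
    typicalSetA θ α n ε ⊆ setD θ α n ε := fun x hx => by
  have := (exp_neg_sub_lt_and_lt_exp_neg_add_iff (strProb_pos (isCatDist_tilt hθ α).1 x) _ _).2
    (abs_log_one_div_strProb_tilt_sub_lt hθ hα hx)
  simpa [setD, neg_mul] using this.1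

theorem typicalSetA_subset_setE (hθ : ∀ a, 0 < θ a) (hα : α ≠ 0) :
    typicalSetA θ α n ε ⊆ setE θ α n ε := fun x hx => by
  have := (exp_neg_sub_lt_and_lt_exp_neg_add_iff (strProb_pos (isCatDist_tilt hθ α).1 x) _ _).2
    (abs_log_one_div_strProb_tilt_sub_lt hθ hα hx)
  simpa [setE, neg_mul] using this.2

theorem one_sub_le_setProb_typicalSetA (hθ : ∀ a, 0 < θ a) (hn : 0 < n) (hε : 0 < ε) :
    1 - crossVarentropy (tilt θ α) θ / (n * ε ^ 2) ≤ setProb (tilt θ α) (typicalSetA θ α n ε) := by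
  have hcompl : (typicalSetA θ α n ε)ᶜ = univ.filter fun x : Fin n → X =>
      n * ε ≤ |∑ i, Real.log (1 / θ (x i)) -
        n * ∑ a, tilt θ α a * Real.log (1 / θ a)| := by
    ext x
    simp only [mem_compl, mem_filter, mem_univ, true_and, mem_typicalSetA_iff hθ, not_lt,
      log_one_div_strProb hθ]
    rfl
  have hcheb := setProb_abs_sum_sub_ge_le (isCatDist_tilt hθ α) (fun a => Real.log (1 / θ a)) n
    (by positivity : (0 : ℝ) < n * ε)
  rw [← hcompl] at hcheb
  change _ ≤ (n : ℝ) * crossVarentropy (tilt θ α) θ / (n * ε) ^ 2 at hcheb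
  have hbound : (n : ℝ) * crossVarentropy (tilt θ α) θ / (n * ε) ^ 2 =
      crossVarentropy (tilt θ α) θ / (n * ε ^ 2) := by
    field_simp
  linarith [setProb_add_setProb_compl (isCatDist_tilt hθ α).2 (typicalSetA θ α n ε)]

end TypicalSet

theorem tilted_typical_set_card_bounds [Fintype X] [Nonempty X] (θ : X → ℝ)
    (hθ : IsCatDist θ) (α : ℝ) (hα : α ≠ 0) (n : ℕ) (hn : 1 ≤ n)
    (ε : ℝ) (hε : 0 < ε) :
    (1 - crossVarentropy (tilt θ α) θ / (n * ε ^ 2)) *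
        Real.exp ((n : ℝ) * shannonEntropy (tilt θ α) - n * |α| * ε) ≤
      ((typicalSetA θ α n ε).card : ℝ) ∧
    ((typicalSetA θ α n ε).card : ℝ) <
      Real.exp ((n : ℝ) * shannonEntropy (tilt θ α) + n * |α| * ε) := by
  constructor
  · calc (1 - crossVarentropy (tilt θ α) θ / (n * ε ^ 2)) *
          Real.exp ((n : ℝ) * shannonEntropy (tilt θ α) - n * |α| * ε)
        ≤ setProb (tilt θ α) (typicalSetA θ α n ε) *
          Real.exp ((n : ℝ) * shannonEntropy (tilt θ α) - n * |α| * ε) := by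
          gcongr
          exact one_sub_le_setProb_typicalSetA hθ.1 (by omega) hε
      _ ≤ (typicalSetA θ α n ε).card *
            Real.exp (-(n : ℝ) * shannonEntropy (tilt θ α) + n * |α| * ε) *
          Real.exp ((n : ℝ) * shannonEntropy (tilt θ α) - n * |α| * ε) := by
          gcongr
          exact setProb_le_card_mul fun x hx =>
            (Finset.mem_filter.1 (typicalSetA_subset_setE hθ.1 hα hx)).2.le
      _ = (typicalSetA θ α n ε).card := by
          rw [mul_assoc, ← Real.exp_add]
          ring_nf
          simp
  · calc ((typicalSetA θ α n ε).card : ℝ)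
        < (Real.exp (-(n : ℝ) * shannonEntropy (tilt θ α) - n * |α| * ε))⁻¹ :=
          card_lt_inv_of_lt_strProb (isCatDist_tilt hθ.1 α) (Real.exp_pos _)
            fun x hx => (Finset.mem_filter.1 (typicalSetA_subset_setD hθ.1 hα hx)).2
      _ = _ := by rw [← Real.exp_neg]; ring_nf
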